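/- In any algebra satisfying (B1)–(B10), the triple iterations collapse: ¬¬¬x = ¬x and ∼̇∼̇∼̇x = ∼̇x for all x. -/

import Mathlib

/-!
By (B1) and the diagonal instance of (B7), `¬x ⊔ ¬¬x = ¬0` and `¬x ⊓ ¬¬x = 0`, so both `¬x` and
`¬¬¬x` are complements of `¬¬x` relative to the interval `[0, ¬0]`; relative complements in a
distributive lattice are unique. The statement for `∼̇` is the order dual, via (B2) and (B8).
-/

theorem iterate_three_eq_of_inf_eq_bot {α : Type*} [DistribLattice α] [OrderBot α] (n : α → α)
    (hdisj : ∀ x, x ⊓ n x = ⊥) (hn : ∀ x, n (x ⊓ n x) = n x ⊔ n (n x)) (x : α) :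
    n (n (n x)) = n x := by
  have hsup : ∀ x, n x ⊔ n (n x) = n ⊥ := fun x => by rw [← hn, hdisj]
  refine eq_of_inf_eq_sup_eq (a := n (n x)) ?_ ?_
  · rw [inf_comm, hdisj, hdisj]
  · rw [sup_comm, hsup, hsup]

theorem iterate_three_eq_of_sup_eq_top {α : Type*} [DistribLattice α] [OrderTop α] (s : α → α)
    (hcodisj : ∀ x, x ⊔ s x = ⊤) (hs : ∀ x, s (x ⊔ s x) = s x ⊓ s (s x)) (x : α) :
    s (s (s x)) = s x :=
  iterate_three_eq_of_inf_eq_bot (α := αᵒᵈ) (OrderDual.toDual ∘ s ∘ OrderDual.ofDual)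
    hcodisj hs x

theorem stmt_general {A : Type*} [DistribLattice A] [BoundedOrder A]
    (n s : A → A)
    (B1 : ∀ x : A, x ⊓ n x = ⊥)
    (B2 : ∀ x : A, x ⊔ s x = ⊤)
    (B7 : ∀ x y : A, n (x ⊓ n y) = n x ⊔ n (n y))
    (B8 : ∀ x y : A, s (x ⊔ s y) = s x ⊓ s (s y)) :
    ∀ x : A, n (n (n x)) = n x ∧ s (s (s x)) = s x := fun x =>
  ⟨iterate_three_eq_of_inf_eq_bot n B1 (fun x => B7 x x) x,
    iterate_three_eq_of_sup_eq_top s B2 (fun x => B8 x x) x⟩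

theorem stmt {A : Type*} [DistribLattice A] [BoundedOrder A]
    (n s : A → A)
    (B1 : ∀ x : A, x ⊓ n x = ⊥)
    (B2 : ∀ x : A, x ⊔ s x = ⊤)
    (B3 : ∀ x : A, n x ⊓ s (n x) = ⊥)
    (B4 : ∀ x : A, s x ⊔ n (s x) = ⊤)
    (B5 : ∀ x y : A, s (x ⊓ y) = s x ⊔ s y)
    (B6 : ∀ x y : A, n (x ⊔ y) = n x ⊓ n y)
    (B7 : ∀ x y : A, n (x ⊓ n y) = n x ⊔ n (n y))
    (B8 : ∀ x y : A, s (x ⊔ s y) = s x ⊓ s (s y))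
    (B9 : ∀ x y : A, (x ⊔ y) ⊓ s (x ⊔ y) ≤ x ⊔ n x)
    (B10 : ∀ x y : A, x ⊓ s x ⊓ y ⊓ s y ≤ s (x ⊔ y)) :
    ∀ x : A, n (n (n x)) = n x ∧ s (s (s x)) = s x :=
  stmt_general n s B1 B2 B7 B8
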